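/- In the structure P_m (the path gadget without $), every directed path from a to b passes through a' as second vertex and b' as second-to-last vertex, has length at most 2m + 4, and its inner portion from a' to b' consists of an x-edge, a (possibly empty) sequence of alternating grid edges, and a y-edge; in particular P_m is a DAG. -/
import Mathlib


/-- The alphabet Σ of the reduction: `warm = true` means warm (W), `false`
cold (C); in `cc`, `blockA = true` means block letter A (else B) and
`horiz = true` means horizontal (H, else V); `s` is the shade. -/
inductive Letter (S : Type) where
  | alpha (warm : Bool)
  | x (warm : Bool)
  | y (warm : Bool)
  | dollar (warm : Bool)
  | omega
  | cc (blockA : Bool) (horiz : Bool) (warm : Bool) (s : S)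

/-- Doubled (red-green) alphabet: `inl` = green, `inr` = red. -/
abbrev LetterD (S : Type) := Letter S ⊕ Letter S

/-- Vertices of the path gadget `P_m`. -/
inductive PV where
  | a | a' | b' | b
  | v (i : ℕ)
deriving DecidableEq

/-- Labelled path with the list of visited vertices (after the start). -/
inductive LPathV {A V : Type} (E : A → V → V → Prop) : V → List A → List V → V → Prop
  | nil (v : V) : LPathV E v [] [] v
  | cons {u v w : V} {a : A} {l : List A} {vs : List V} :
      E a u v → LPathV E v l vs w → LPathV E u (a :: l) (v :: vs) w

/-- The edge relation of `P_m` (with arbitrary shades `sh i` on the grid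
edges): every cold edge is green, every warm edge is red; edge `v_i → v_{i+1}`
is A-horizontal for even `i` and B-vertical for odd `i`. -/
def EP (S : Type) (m : ℕ) (sh : ℕ → S) : LetterD S → PV → PV → Prop :=
  fun lab p q =>
    (p = .a ∧ q = .a' ∧
      (lab = .inl (.alpha false) ∨ lab = .inr (.alpha true))) ∨
    (p = .b' ∧ q = .b ∧ (lab = .inl .omega ∨ lab = .inr .omega)) ∨
    (∃ i, i ≤ 2 * m ∧ p = .a' ∧ q = .v i ∧
      (lab = .inl (.x false) ∨ lab = .inr (.x true))) ∨
    (∃ i, i ≤ 2 * m ∧ p = .v i ∧ q = .b' ∧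
      (lab = .inl (.y false) ∨ lab = .inr (.y true))) ∨
    (∃ i, i < 2 * m ∧ p = .v i ∧ q = .v (i + 1) ∧
      (lab = .inl (.cc (i % 2 == 0) (i % 2 == 0) false (sh i)) ∨
       lab = .inr (.cc (i % 2 == 0) (i % 2 == 0) true (sh i))))

/-- Rank function witnessing that `P_m` is a DAG. -/
def pvRank (m : ℕ) : PV → ℕ
  | .a => 0
  | .a' => 1
  | .v i => i + 2
  | .b' => 2 * m + 3
  | .b => 2 * m + 4

lemma EP_rank {S : Type} {m : ℕ} {sh : ℕ → S} {c : LetterD S} {p q : PV}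
    (h : EP S m sh c p q) : pvRank m p < pvRank m q := by
  rcases h with ⟨hp, hq, -⟩ | ⟨hp, hq, -⟩ | ⟨i, hi, hp, hq, -⟩ |
    ⟨i, hi, hp, hq, -⟩ | ⟨i, hi, hp, hq, -⟩ <;>
    subst hp <;> subst hq <;> simp only [pvRank] <;> omega

lemma LPathV_rank {S : Type} {m : ℕ} {sh : ℕ → S} {p q : PV}
    {w : List (LetterD S)} {vs : List PV}
    (h : LPathV (EP S m sh) p w vs q) : pvRank m p + w.length ≤ pvRank m q := by
  induction h with
  | nil => simp
  | cons hE _ ih =>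
    have := EP_rank hE
    simp only [List.length_cons]
    omega

lemma path_from_b {S : Type} {m : ℕ} {sh : ℕ → S} {q : PV}
    {w : List (LetterD S)} {vs : List PV}
    (h : LPathV (EP S m sh) PV.b w vs q) : w = [] ∧ vs = [] ∧ q = PV.b := by
  cases h with
  | nil => exact ⟨rfl, rfl, rfl⟩
  | cons hE _ => simp [EP] at hE

lemma path_from_b' {S : Type} {m : ℕ} {sh : ℕ → S}
    {w : List (LetterD S)} {vs : List PV}
    (h : LPathV (EP S m sh) PV.b' w vs PV.b) :
    ∃ c4, w = [c4] ∧ vs = [PV.b] ∧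
      (c4 = Sum.inl Letter.omega ∨ c4 = Sum.inr Letter.omega) := by
  cases h with
  | cons hE htail =>
    rcases hE with ⟨h1, -⟩ | ⟨-, h2, hc⟩ | ⟨i, -, h1, -⟩ | ⟨i, -, h1, -⟩ |
        ⟨i, -, h1, -⟩ <;> try (exact absurd h1 (by simp))
    subst h2
    obtain ⟨hw, hvs, -⟩ := path_from_b htail
    subst hw; subst hvs
    exact ⟨_, rfl, rfl, hc⟩

lemma range_map_v (i k : ℕ) :
    (List.range (k + 1)).map (fun t => PV.v (i + t)) =
      PV.v i :: (List.range k).map (fun t => PV.v (i + 1 + t)) := by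
  rw [List.range_succ_eq_map, List.map_cons, List.map_map]
  simp only [Nat.add_zero]
  congr 1
  apply List.map_congr_left
  intro t _
  simp only [Function.comp_apply]
  congr 1
  omega

lemma path_from_v {S : Type} {m : ℕ} {sh : ℕ → S} :
    ∀ (w : List (LetterD S)) (i : ℕ) (vs : List PV), i ≤ 2 * m →
    LPathV (EP S m sh) (PV.v i) w vs PV.b →
    ∃ k mid c3 c4, i + k ≤ 2 * m ∧
      vs = ((List.range k).map fun t => PV.v (i + 1 + t)) ++ [PV.b', PV.b] ∧
      w = mid ++ [c3, c4] ∧ mid.length = k ∧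
      (∀ c ∈ mid, ∃ l o t s, c = Sum.inl (.cc l o t s) ∨ c = Sum.inr (.cc l o t s)) ∧
      (c3 = Sum.inl (.y false) ∨ c3 = Sum.inr (.y true)) ∧
      (c4 = Sum.inl Letter.omega ∨ c4 = Sum.inr Letter.omega) := by
  intro w
  induction w with
  | nil => intro i vs hi h; cases h
  | cons c l ih =>
    intro i vs hi h
    cases h with
    | cons hE htail =>
      rcases hE with ⟨h1, -⟩ | ⟨h1, -⟩ | ⟨j, -, h1, -⟩ |
          ⟨j, hj, h1, h2, hc⟩ | ⟨j, hj, h1, h2, hc⟩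
      · exact absurd h1 (by simp)
      · exact absurd h1 (by simp)
      · exact absurd h1 (by simp)
      · -- y-edge to b'
        injection h1 with hij
        subst h2
        obtain ⟨c4, hw, hvs, hc4⟩ := path_from_b' htail
        subst hw; subst hvs; subst hij
        exact ⟨0, [], c, c4, by omega, by simp, rfl, rfl, by simp, hc, hc4⟩
      · -- grid edge to v (j+1)
        injection h1 with hij
        subst hij; subst h2
        obtain ⟨k, mid, c3, c4, hk, hvs, hw, hlen, hmid, hc3, hc4⟩ :=
          ih (i + 1) _ (by omega) htail
        refine ⟨k + 1, c :: mid, c3, c4, by omega, ?_, by simp [hw], by simp [hlen],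
          ?_, hc3, hc4⟩
        · rw [range_map_v, List.cons_append, hvs]
        · intro d hd
          rcases List.mem_cons.mp hd with hd | hd
          · subst hd
            rcases hc with hc | hc <;> subst hc
            · exact ⟨_, _, _, _, Or.inl rfl⟩
            · exact ⟨_, _, _, _, Or.inr rfl⟩
          · exact hmid d hd

/-- every directed path from `a` to `b` in `P_m` has `a'` as its
second vertex and `b'` as its second-to-last vertex, has length at most
`2m + 4`, and its inner portion from `a'` to `b'` is an x-edge, a (possibly
empty) sequence of consecutive grid edges, and a y-edge; moreover `P_m` is a
DAG. -/
theorem Pm_paths_and_dag (S : Type) (m : ℕ) (sh : ℕ → S) :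
    (∀ (w : List (LetterD S)) (vs : List PV),
      LPathV (EP S m sh) PV.a w vs PV.b →
        (∃ i k, 1 ≤ k ∧ i + k ≤ 2 * m + 1 ∧
          vs = PV.a' :: (((List.range k).map fun t => PV.v (i + t)) ++ [PV.b', PV.b]) ∧
          w.length = k + 3 ∧ w.length ≤ 2 * m + 4) ∧
        (∃ (c1 c2 c3 c4 : LetterD S) (mid : List (LetterD S)),
          w = c1 :: c2 :: (mid ++ [c3, c4]) ∧
          (c1 = .inl (.alpha false) ∨ c1 = .inr (.alpha true)) ∧
          (c2 = .inl (.x false) ∨ c2 = .inr (.x true)) ∧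
          (∀ c ∈ mid, ∃ l o t s, c = Sum.inl (.cc l o t s) ∨ c = Sum.inr (.cc l o t s)) ∧
          (c3 = .inl (.y false) ∨ c3 = .inr (.y true)) ∧
          (c4 = .inl .omega ∨ c4 = .inr .omega))) ∧
    (∀ (p : PV) (c : LetterD S) (l : List (LetterD S)) (vs : List PV),
      ¬ LPathV (EP S m sh) p (c :: l) vs p) := by
  constructor
  · intro w vs h
    cases h with
    | cons hE htail =>
      rcases hE with ⟨-, h2, hc1⟩ | ⟨h1, -⟩ | ⟨j, -, h1, -⟩ | ⟨j, -, h1, -⟩ |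
          ⟨j, -, h1, -⟩
      · subst h2
        cases htail with
        | cons hE2 htail2 =>
          rcases hE2 with ⟨h1, -⟩ | ⟨h1, -⟩ | ⟨i, hi, -, h2, hc2⟩ | ⟨j, -, h1, -⟩ |
              ⟨j, -, h1, -⟩
          · exact absurd h1 (by simp)
          · exact absurd h1 (by simp)
          · subst h2
            obtain ⟨k, mid, c3, c4, hk, hvs, hw, hlen, hmid, hc3, hc4⟩ :=
              path_from_v _ i _ hi htail2
            constructor
            · refine ⟨i, k + 1, by omega, by omega, ?_, ?_, ?_⟩
              · rw [range_map_v, List.cons_append, hvs]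
              · simp [hw, hlen]
              · simp only [hw, List.length_cons, List.length_append, List.length_nil, hlen]
                omega
            · exact ⟨_, _, c3, c4, mid, by rw [hw], hc1, hc2, hmid, hc3, hc4⟩
          · exact absurd h1 (by simp)
          · exact absurd h1 (by simp)
      · exact absurd h1 (by simp)
      · exact absurd h1 (by simp)
      · exact absurd h1 (by simp)
      · exact absurd h1 (by simp)
  · intro p c l vs h
    have := LPathV_rank h
    simp only [List.length_cons] at this
    omega
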